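/- arXiv:2108.03749 — 10 statements merged into one kernel-verified Lean document; each statement's English description precedes it below -/
import Mathlib

section
/- Assume additionally that 0 < P_{ℓH} and P_{ℓL} < 1 (so all four conditional signal probabilities are strictly positive). Then P_{ℓH} < T_{ℓh} < T_{ℓℓ} < P_{ℓL} and P_{hH} > T_{hh} > T_{hℓ} > P_{hL}. -/
/-- Binary model: two worlds `L`, `H` with priors `PL, PH`, two signals `ℓ`, `h` with
conditional probabilities `PlL, PhL, PlH, PhH`.  Posterior predictions
`T_{m'm} = (PL·P_{mL}·P_{m'L} + PH·P_{mH}·P_{m'H})/(PL·P_{mL} + PH·P_{mH})`.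
Assuming `0 < P_{ℓH}` and `P_{ℓL} < 1`, we have
`P_{ℓH} < T_{ℓh} < T_{ℓℓ} < P_{ℓL}` and `P_{hH} > T_{hh} > T_{hℓ} > P_{hL}`. -/
theorem key_inequality
    (PL PH PlL PhL PlH PhH : ℝ)
    (hPL : 0 < PL) (hPH : 0 < PH) (hP : PL + PH = 1)
    (hPlL0 : 0 ≤ PlL) (hPlL1 : PlL ≤ 1) (hPhL0 : 0 ≤ PhL) (hPhL1 : PhL ≤ 1)
    (hPlH0 : 0 ≤ PlH) (hPlH1 : PlH ≤ 1) (hPhH0 : 0 ≤ PhH) (hPhH1 : PhH ≤ 1)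
    (hsumL : PlL + PhL = 1) (hsumH : PlH + PhH = 1)
    (hcorr : PlH < PlL)
    (hpos : 0 < PlH) (hlt : PlL < 1) :
    PlH < (PL * PhL * PlL + PH * PhH * PlH) / (PL * PhL + PH * PhH) ∧
    (PL * PhL * PlL + PH * PhH * PlH) / (PL * PhL + PH * PhH) <
      (PL * PlL * PlL + PH * PlH * PlH) / (PL * PlL + PH * PlH) ∧
    (PL * PlL * PlL + PH * PlH * PlH) / (PL * PlL + PH * PlH) < PlL ∧
    PhH > (PL * PhL * PhL + PH * PhH * PhH) / (PL * PhL + PH * PhH) ∧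
    (PL * PhL * PhL + PH * PhH * PhH) / (PL * PhL + PH * PhH) >
      (PL * PlL * PhL + PH * PlH * PhH) / (PL * PlL + PH * PlH) ∧
    (PL * PlL * PhL + PH * PlH * PhH) / (PL * PlL + PH * PlH) > PhL := by
  have hPhL : 0 < PhL := by linarith
  have hPhH : 0 < PhH := by linarith
  have dh : 0 < PL * PhL + PH * PhH := by positivity
  have dl : 0 < PL * PlL + PH * PlH := by positivity
  have key : 0 < PlL * PhH - PlH * PhL := by nlinarith
  refine ⟨?_, ?_, ?_, ?_, ?_, ?_⟩
  · rw [lt_div_iff₀ dh]; nlinarith [mul_pos hPL hPhL]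
  · rw [div_lt_div_iff₀ dh dl]
    nlinarith [mul_pos (mul_pos hPL hPH) (mul_pos (sub_pos.2 hcorr) key)]
  · rw [div_lt_iff₀ dl]; nlinarith [mul_pos hPH hpos]
  · rw [gt_iff_lt, div_lt_iff₀ dh]; nlinarith [mul_pos hPL hPhL]
  · rw [gt_iff_lt, div_lt_div_iff₀ dl dh]
    nlinarith [mul_pos (mul_pos hPL hPH) (mul_pos (sub_pos.2 hcorr) key)]
  · rw [gt_iff_lt, lt_div_iff₀ dl]; nlinarith [mul_pos hPH hpos]
end

section
/- (Correctness of the mechanism in world L.) Assume 0 < P_{ℓH} and P_{ℓL} < 1, and let c = (1/3)·min{T_{ℓh} − P_{ℓH}, T_{ℓℓ} − T_{ℓh}, P_{ℓL} − T_{ℓℓ}, P_{hH} − T_{hh}, T_{hh} − T_{hℓ}, T_{hℓ} − P_{hL}} (which is positive). Let T be an odd positive integer and F, U, K natural numbers with F + U + K = T, 2F < T and 2U < T. Set a_ℓ = (F + K·T_{hℓ})/T and a_h = (F + K·T_{hh})/T. For each k ∈ {0, 1, …, K} let frac(k) = (F + k)/T and let med(k) be the ((T+1)/2)-th smallest element of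 the multiset consisting of F copies of 0, (K − k) copies of a_ℓ, k copies of a_h, and U copies of 1. Then the probability, for k drawn from the binomial distribution Binomial(K, P_{hL}), that frac(k) > med(k) is at most 2·exp(−2c²K). -/
/-!
If `A` is output in world `L`, the median prediction lies below `frac(k)`. Only the `F < T/2`
zeros among the predictions are smaller than `a_ℓ`, so the median is at least `a_ℓ`, and hence
`k > K·T_{hℓ} ≥ K·(P_{hL} + 3c)`. The posteriors satisfy
`P_{hL} ≤ T_{hℓ} ≤ T_{hh} ≤ P_{hH}` and `T_{ℓm} = 1 - T_{hm}`, so every gap in the definition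
of `c` is nonnegative. A Chernoff bound with exponential moment `3c/2` bounds the binomial
upper tail by `exp(-9c²K/4) ≤ 2·exp(-2c²K)`.
-/

open scoped ENNReal

/-- Posterior prediction `T_{m'm}` of the fraction of agents receiving signal `m'`,
for an agent who received signal `m`. -/
noncomputable def Tpost (PL PH PmL PmH Pm'L Pm'H : ℝ) : ℝ :=
  (PL * PmL * Pm'L + PH * PmH * Pm'H) / (PL * PmL + PH * PmH)

/-- The constant `c` of equation (3). -/
noncomputable def cconst (PL PH PlL PhL PlH PhH : ℝ) : ℝ :=
  (1 / 3) * min (min (min (Tpost PL PH PhL PhH PlL PlH - PlH)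
      (Tpost PL PH PlL PlH PlL PlH - Tpost PL PH PhL PhH PlL PlH))
    (min (PlL - Tpost PL PH PlL PlH PlL PlH)
      (PhH - Tpost PL PH PhL PhH PhL PhH)))
    (min (Tpost PL PH PhL PhH PhL PhH - Tpost PL PH PlL PlH PhL PhH)
      (Tpost PL PH PlL PlH PhL PhH - PhL))

/-- `med F U K T al ah k` : the `((T+1)/2)`-th smallest element of the multiset consisting of
`F` copies of `0`, `K - k` copies of `al`, `k` copies of `ah` and `U` copies of `1`. -/
noncomputable def medOf (F U K T : ℕ) (al ah : ℝ) (k : ℕ) : ℝ :=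
  ((Multiset.replicate F (0 : ℝ) + Multiset.replicate (K - k) al +
      Multiset.replicate k ah + Multiset.replicate U (1 : ℝ)).sort (· ≤ ·)).getD
    ((T + 1) / 2 - 1) 0

open Finset Real NNReal

section Posterior

variable {PL PH a b a' b' x y x' y' : ℝ}

theorem le_Tpost (hb : 0 ≤ PH * b) (hD : 0 < PL * a + PH * b) (hxy : x ≤ y) :
    x ≤ Tpost PL PH a b x y := by
  unfold Tpost; rw [le_div_iff₀ hD]; nlinarith

theorem Tpost_le (ha : 0 ≤ PL * a) (hD : 0 < PL * a + PH * b) (hxy : x ≤ y) :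
    Tpost PL PH a b x y ≤ y := by
  unfold Tpost; rw [div_le_iff₀ hD]; nlinarith

theorem Tpost_le_Tpost (hPL : 0 ≤ PL) (hPH : 0 ≤ PH) (hD : 0 < PL * a + PH * b)
    (hD' : 0 < PL * a' + PH * b') (hxy : x ≤ y) (hab : a' * b ≤ a * b') :
    Tpost PL PH a b x y ≤ Tpost PL PH a' b' x y := by
  unfold Tpost; rw [div_le_div_iff₀ hD hD']
  nlinarith [mul_nonneg (mul_nonneg hPL hPH) (mul_nonneg (sub_nonneg.2 hxy) (sub_nonneg.2 hab))]

theorem Tpost_add_Tpost (hD : PL * a + PH * b ≠ 0) (hx : x + x' = 1) (hy : y + y' = 1) :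
    Tpost PL PH a b x y + Tpost PL PH a b x' y' = 1 := by
  unfold Tpost; field_simp; linear_combination PL * a * hx + PH * b * hy

end Posterior

section BinaryModel

variable {PL PH PlL PhL PlH PhH : ℝ}

theorem PhL_le_Tpost_le_Tpost_le_PhH (hPL : 0 < PL) (hPH : 0 < PH) (hPhL0 : 0 ≤ PhL)
    (hPlH0 : 0 ≤ PlH) (hsumL : PlL + PhL = 1) (hsumH : PlH + PhH = 1) (hcorr : PlH < PlL) :
    PhL ≤ Tpost PL PH PlL PlH PhL PhH ∧
      Tpost PL PH PlL PlH PhL PhH ≤ Tpost PL PH PhL PhH PhL PhH ∧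
      Tpost PL PH PhL PhH PhL PhH ≤ PhH := by
  have hPhLH : PhL ≤ PhH := by linarith
  have hDl : 0 < PL * PlL + PH * PlH := by nlinarith
  have hDh : 0 < PL * PhL + PH * PhH := by nlinarith
  exact ⟨le_Tpost (by positivity) hDl hPhLH,
    Tpost_le_Tpost hPL.le hPH.le hDl hDh hPhLH (by nlinarith),
    Tpost_le (by positivity) hDh hPhLH⟩

theorem cconst_nonneg (hPL : 0 < PL) (hPH : 0 < PH) (hPhL0 : 0 ≤ PhL)
    (hPlH0 : 0 ≤ PlH) (hsumL : PlL + PhL = 1) (hsumH : PlH + PhH = 1) (hcorr : PlH < PlL) :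
    0 ≤ cconst PL PH PlL PhL PlH PhH := by
  obtain ⟨hhl, hmid, hhh⟩ :=
    PhL_le_Tpost_le_Tpost_le_PhH hPL hPH hPhL0 hPlH0 hsumL hsumH hcorr
  have hlh := Tpost_add_Tpost (PL := PL) (PH := PH) (a := PhL) (b := PhH) (by nlinarith)
    hsumL hsumH
  have hll := Tpost_add_Tpost (PL := PL) (PH := PH) (a := PlL) (b := PlH) (by nlinarith)
    hsumL hsumH
  unfold cconst
  refine mul_nonneg (by norm_num) ?_
  simp only [le_min_iff, sub_nonneg]
  refine ⟨⟨⟨?_, ?_⟩, ?_, ?_⟩, ?_, ?_⟩ <;> linarith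

theorem three_mul_cconst_le (PL PH PlL PhL PlH PhH : ℝ) :
    3 * cconst PL PH PlL PhL PlH PhH ≤ Tpost PL PH PlL PlH PhL PhH - PhL := by
  have key (A B C : ℝ) : 3 * (1 / 3 * min A (min B C)) ≤ C := by
    linarith [(min_le_right A (min B C)).trans (min_le_right B C)]
  exact key _ _ _

end BinaryModel

theorem Multiset.le_getD_sort_of_card_filter_lt_le {α : Type*} [LinearOrder α]
    {s : Multiset α} {a d : α} {i : ℕ} (hi : i < card s) (h : card (s.filter (· < a)) ≤ i) :
    a ≤ (s.sort (· ≤ ·)).getD i d := by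
  set l := s.sort (· ≤ ·)
  have hil : i < l.length := by rwa [Multiset.length_sort]
  rw [List.getD_eq_getElem _ _ hil]
  by_contra! hlt
  have hprefix : (l.take (i + 1)).filter (· < a) = l.take (i + 1) := by
    refine List.filter_eq_self.mpr fun x hx => ?_
    obtain ⟨j, hj, rfl⟩ := List.getElem_of_mem hx
    rw [List.getElem_take, decide_eq_true_eq]
    have hji : j ≤ i := by simp only [List.length_take] at hj; omega
    exact ((s.pairwise_sort _).sortedLE.getElem_le_getElem_of_le hji).trans_lt hlt
  have hcount := ((l.take_sublist (i + 1)).filter (· < a)).length_le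
  rw [hprefix, List.length_take_of_le hil] at hcount
  have hfilter : (l.filter (· < a)).length = card (s.filter (· < a)) := by
    rw [← Multiset.coe_card, ← Multiset.filter_coe, Multiset.sort_eq]
  omega

theorem le_medOf {F U K T : ℕ} {al ah : ℝ} {k : ℕ} (hk : k ≤ K) (hal : al ≤ ah) (hal1 : al ≤ 1)
    (hFUK : F + U + K = T) (hF : 2 * F < T) : al ≤ medOf F U K T al ah k := by
  refine Multiset.le_getD_sort_of_card_filter_lt_le ?_ ?_
  · simp only [Multiset.card_add, Multiset.card_replicate]
    omega
  · have hnone (n : ℕ) (x : ℝ) (hx : al ≤ x) :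
        (Multiset.replicate n x).filter (· < al) = 0 :=
      Multiset.filter_eq_nil.mpr fun y hy => (Multiset.eq_of_mem_replicate hy ▸ hx).not_gt
    rw [Multiset.filter_add, Multiset.filter_add, Multiset.filter_add, hnone _ _ le_rfl,
      hnone _ _ hal, hnone _ _ hal1]
    have := Multiset.card_le_card (Multiset.filter_le (· < al) (Multiset.replicate F (0 : ℝ)))
    simp only [add_zero, Multiset.card_replicate] at this ⊢
    omega

theorem PMF.binomial_apply_eq_ofReal (p : ℝ≥0) (hp : p ≤ 1) (K : ℕ) (k : Fin (K + 1)) :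
    PMF.binomial p hp K k =
      ENNReal.ofReal ((p : ℝ) ^ (k : ℕ) * (1 - p) ^ (K - k) * K.choose k) := by
  rw [PMF.binomial_apply, Fin.val_last, ← NNReal.coe_one, ← NNReal.coe_sub hp]
  norm_cast
  rw [ENNReal.ofReal_coe_nnreal]

theorem sum_binomial_mul_exp (p s : ℝ) (K : ℕ) :
    ∑ k ∈ range (K + 1), p ^ k * (1 - p) ^ (K - k) * K.choose k * exp (s * k) =
      (p * exp s + (1 - p)) ^ K := by
  rw [add_pow]
  refine sum_congr rfl fun k _ => ?_
  rw [mul_pow, ← Real.exp_nat_mul, mul_comm (k : ℝ) s]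
  ring

theorem mul_exp_add_one_sub_le {p s : ℝ} (hp : 0 ≤ p) (hs : |s| ≤ 1) :
    p * exp s + (1 - p) ≤ exp (p * (s + s ^ 2)) := by
  have hexp : exp s ≤ 1 + (s + s ^ 2) := by
    linarith [(abs_le.mp (Real.abs_exp_sub_one_sub_id_le hs)).2]
  nlinarith [Real.add_one_le_exp (p * (s + s ^ 2))]

theorem sum_binomial_upper_tail_le {p t : ℝ} (hp0 : 0 ≤ p) (hp1 : p ≤ 1) (ht0 : 0 ≤ t)
    (ht2 : t ≤ 2) (K : ℕ) :
    ∑ k ∈ range (K + 1), (if K * (p + t) ≤ k then p ^ k * (1 - p) ^ (K - k) * K.choose k else 0)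
      ≤ exp (-(t ^ 2 * K / 4)) := by
  set s := t / 2 with hs
  have hw : ∀ k, 0 ≤ p ^ k * (1 - p) ^ (K - k) * K.choose k := fun k => by
    have : 0 ≤ 1 - p := by linarith
    positivity
  calc _ ≤ ∑ k ∈ range (K + 1),
          p ^ k * (1 - p) ^ (K - k) * K.choose k * exp (s * k) * exp (-(s * (K * (p + t)))) := by
        refine sum_le_sum fun k _ => ?_
        split_ifs with hk
        · rw [mul_assoc _ (exp _), ← Real.exp_add]
          refine le_mul_of_one_le_right (hw k) (Real.one_le_exp ?_)
          nlinarith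
        · positivity
    _ = (p * exp s + (1 - p)) ^ K * exp (-(s * (K * (p + t)))) := by
        rw [← sum_mul, sum_binomial_mul_exp]
    _ ≤ exp (p * (s + s ^ 2)) ^ K * exp (-(s * (K * (p + t)))) := by
        gcongr
        exact mul_exp_add_one_sub_le hp0 (abs_le.mpr ⟨by linarith, by linarith⟩)
    _ = exp (K * (p * s ^ 2 - s * t)) := by
        rw [← Real.exp_nat_mul, ← Real.exp_add]; ring_nf
    _ ≤ exp (-(t ^ 2 * K / 4)) := by
        refine Real.exp_le_exp.mpr ?_
        have hK : (0 : ℝ) ≤ K := K.cast_nonneg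
        rw [hs]
        nlinarith [mul_nonneg (mul_nonneg hK (sq_nonneg t)) (sub_nonneg.mpr hp1)]

theorem PMF.binomial_upper_tail_le (p : ℝ≥0) (hp : p ≤ 1) (K : ℕ) {t : ℝ} (ht0 : 0 ≤ t)
    (ht2 : t ≤ 2) :
    ∑ k : Fin (K + 1), (if K * ((p : ℝ) + t) ≤ (k : ℕ) then PMF.binomial p hp K k else 0)
      ≤ ENNReal.ofReal (exp (-(t ^ 2 * K / 4))) := by
  have hp1 : (p : ℝ) ≤ 1 := hp
  calc _ = ENNReal.ofReal (∑ k ∈ range (K + 1), if K * ((p : ℝ) + t) ≤ k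
          then (p : ℝ) ^ k * (1 - p) ^ (K - k) * K.choose k else 0) := by
        rw [ENNReal.ofReal_sum_of_nonneg, ← Fin.sum_univ_eq_sum_range]
        · simp only [apply_ite ENNReal.ofReal, ENNReal.ofReal_zero,
            PMF.binomial_apply_eq_ofReal]
        · intro k _
          have : (0 : ℝ) ≤ 1 - p := by linarith
          positivity
    _ ≤ ENNReal.ofReal (exp (-(t ^ 2 * K / 4))) :=
        ENNReal.ofReal_le_ofReal (sum_binomial_upper_tail_le p.2 hp1 ht0 ht2 K)

theorem mul_lt_of_medOf_lt {F U K T k : ℕ} {τ τ' : ℝ} (hk : k ≤ K) (hτ : τ ≤ τ') (hτ1 : τ ≤ 1)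
    (hFUK : F + U + K = T) (hF : 2 * F < T)
    (h : medOf F U K T ((F + K * τ) / T) ((F + K * τ') / T) k < ((F : ℝ) + k) / T) :
    K * τ < k := by
  have hT : (0 : ℝ) < T := by exact_mod_cast (by omega : 0 < T)
  have hFK : (F : ℝ) + K ≤ T := by exact_mod_cast (by omega : F + K ≤ T)
  have hal1 : (F + K * τ) / T ≤ 1 := by
    rw [div_le_one hT]
    nlinarith [K.cast_nonneg (α := ℝ)]
  have hmed := le_medOf (ah := (F + K * τ') / T) hk (by gcongr) hal1 hFUK hF
  have := (div_lt_div_iff_of_pos_right hT).mp (hmed.trans_lt h)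
  linarith

theorem mechanism_correct_world_L_general
    (PL PH PlL PhL PlH PhH : ℝ)
    (hPL : 0 < PL) (hPH : 0 < PH)
    (hPhL0 : 0 ≤ PhL) (hPhL1 : PhL ≤ 1)
    (hPlH0 : 0 ≤ PlH)
    (hsumL : PlL + PhL = 1) (hsumH : PlH + PhH = 1)
    (hcorr : PlH < PlL)
    (T F U K : ℕ)
    (hFUK : F + U + K = T) (hF : 2 * F < T) :
    (∑ k : Fin (K + 1),
        if medOf F U K T (((F : ℝ) + K * Tpost PL PH PlL PlH PhL PhH) / T)
              (((F : ℝ) + K * Tpost PL PH PhL PhH PhL PhH) / T) k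
            < ((F : ℝ) + (k : ℕ)) / T
          then PMF.binomial (Real.toNNReal PhL) ((Real.toNNReal_le_toNNReal hPhL1).trans_eq Real.toNNReal_one) K k
          else 0)
      ≤ ENNReal.ofReal (2 * Real.exp (-2 * (cconst PL PH PlL PhL PlH PhH) ^ 2 * K)) := by
  set c := cconst PL PH PlL PhL PlH PhH
  obtain ⟨hhl, hmid, hhh⟩ :=
    PhL_le_Tpost_le_Tpost_le_PhH hPL hPH hPhL0 hPlH0 hsumL hsumH hcorr
  have hc0 : 0 ≤ c := cconst_nonneg hPL hPH hPhL0 hPlH0 hsumL hsumH hcorr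
  have hc3 : 3 * c ≤ Tpost PL PH PlL PlH PhL PhH - PhL := three_mul_cconst_le ..
  have hp : (PhL.toNNReal : ℝ) = PhL := Real.coe_toNNReal _ hPhL0
  calc _ ≤ ∑ k : Fin (K + 1), if K * ((PhL.toNNReal : ℝ) + 3 * c) ≤ (k : ℕ)
          then PMF.binomial PhL.toNNReal
            ((Real.toNNReal_le_toNNReal hPhL1).trans_eq Real.toNNReal_one) K k else 0 := by
        refine Finset.sum_le_sum fun k _ => ?_
        split_ifs with hA hk
        · exact le_rfl
        · have := mul_lt_of_medOf_lt k.is_le hmid (by linarith) hFUK hF hA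
          exact absurd (by rw [hp]; nlinarith [K.cast_nonneg (α := ℝ)]) hk
        · exact bot_le
        · exact le_rfl
    _ ≤ ENNReal.ofReal (Real.exp (-((3 * c) ^ 2 * K / 4))) :=
        PMF.binomial_upper_tail_le _ _ K (by positivity) (by linarith)
    _ ≤ ENNReal.ofReal (2 * Real.exp (-2 * c ^ 2 * K)) := by
        refine ENNReal.ofReal_le_ofReal ?_
        have : Real.exp (-((3 * c) ^ 2 * K / 4)) ≤ Real.exp (-2 * c ^ 2 * K) :=
          Real.exp_le_exp.mpr (by nlinarith [K.cast_nonneg (α := ℝ), sq_nonneg c])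
        linarith [Real.exp_pos (-2 * c ^ 2 * K)]

/-- Correctness of the Wisdom-of-the-Crowd-Voting mechanism in world `L`: under truthful play,
the probability (over the binomially distributed number `k` of contingent agents receiving
signal `h`) that the fraction of reported `h` signals exceeds the median of the predictions
(i.e. that `A` is wrongly announced) is at most `2·exp(−2c²K)`. -/
theorem mechanism_correct_world_L
    (PL PH PlL PhL PlH PhH : ℝ)
    (hPL : 0 < PL) (hPH : 0 < PH) (hP : PL + PH = 1)
    (hPlL0 : 0 ≤ PlL) (hPlL1 : PlL ≤ 1) (hPhL0 : 0 ≤ PhL) (hPhL1 : PhL ≤ 1)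
    (hPlH0 : 0 ≤ PlH) (hPlH1 : PlH ≤ 1) (hPhH0 : 0 ≤ PhH) (hPhH1 : PhH ≤ 1)
    (hsumL : PlL + PhL = 1) (hsumH : PlH + PhH = 1)
    (hcorr : PlH < PlL)
    (hpos : 0 < PlH) (hlt : PlL < 1)
    (T F U K : ℕ) (hT : Odd T) (hTpos : 0 < T)
    (hFUK : F + U + K = T) (hF : 2 * F < T) (hU : 2 * U < T) :
    (∑ k : Fin (K + 1),
        if medOf F U K T (((F : ℝ) + K * Tpost PL PH PlL PlH PhL PhH) / T)
              (((F : ℝ) + K * Tpost PL PH PhL PhH PhL PhH) / T) k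
            < ((F : ℝ) + (k : ℕ)) / T
          then PMF.binomial (Real.toNNReal PhL) ((Real.toNNReal_le_toNNReal hPhL1).trans_eq Real.toNNReal_one) K k
          else 0)
      ≤ ENNReal.ofReal (2 * Real.exp (-2 * (cconst PL PH PlL PhL PlH PhH) ^ 2 * K)) :=
  mechanism_correct_world_L_general PL PH PlL PhL PlH PhH hPL hPH hPhL0 hPhL1 hPlH0 hsumL hsumH
    hcorr T F U K hFUK hF
end

section
/- (No win-win, limit version.) Let λ'_L, λ'_H ∈ [0,1] and set λ*_L = 0, λ*_H = 1 (the outcome probabilities of alternative A under the truthful profile in the limit T → ∞). Let t₁ be a candidate-friendly agent with utility v₁ and t₂ a candidate-unfriendly agent with utility v₂. Then: (i) if u₁(λ'_L, λ'_H) − u₁(λ*_L, λ*_H) > 0 then u₂(λ'_L, λ'_H) − u₂(λ*_L, λ*_H) < 0; and (ii) if u₂(λ'_L, λ'_H) − u₂(λ*_L, λ*_H) > 0 then u₁(λ'_L, λ'_H) − u₁(λ*_L, λ*_H) < 0. Here uᵢ denotes the expected utility of agent tᵢ. -/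
/-- Expected utility of an agent with utility values `vLA, vLR, vHA, vHR` when alternative `A`
wins with probability `lamL` in world `L` and `lamH` in world `H`. -/
def expUtility (PL PH vLA vLR vHA vHR lamL lamH : ℝ) : ℝ :=
  PL * (lamL * vLA + (1 - lamL) * vLR) + PH * (lamH * vHA + (1 - lamH) * vHR)

/-- No win-win, limit version: with the truthful outcome probabilities `λ*_L = 0`, `λ*_H = 1`,
a candidate-friendly agent `t₁` and a candidate-unfriendly agent `t₂` cannot both gain from a
deviation: if one strictly gains, the other strictly loses. -/
theorem no_win_win_limit
    (PL PH : ℝ) (hPL : 0 < PL) (hPH : 0 < PH) (hP : PL + PH = 1)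
    (lamL' lamH' : ℝ) (hL0 : 0 ≤ lamL') (hL1 : lamL' ≤ 1) (hH0 : 0 ≤ lamH') (hH1 : lamH' ≤ 1)
    (v1LA v1LR v1HA v1HR : ℝ)
    (h1 : v1HA > v1LA ∧ v1LA > v1LR ∧ v1LR > v1HR)
    (v2LA v2LR v2HA v2HR : ℝ)
    (h2 : v2LR > v2HR ∧ v2HR > v2HA ∧ v2HA > v2LA) :
    (expUtility PL PH v1LA v1LR v1HA v1HR lamL' lamH'
        - expUtility PL PH v1LA v1LR v1HA v1HR 0 1 > 0 →
      expUtility PL PH v2LA v2LR v2HA v2HR lamL' lamH'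
        - expUtility PL PH v2LA v2LR v2HA v2HR 0 1 < 0) ∧
    (expUtility PL PH v2LA v2LR v2HA v2HR lamL' lamH'
        - expUtility PL PH v2LA v2LR v2HA v2HR 0 1 > 0 →
      expUtility PL PH v1LA v1LR v1HA v1HR lamL' lamH'
        - expUtility PL PH v1LA v1LR v1HA v1HR 0 1 < 0) := by
  obtain ⟨h1a, h1b, h1c⟩ := h1
  obtain ⟨h2a, h2b, h2c⟩ := h2
  simp only [expUtility]
  set x := PL * lamL' with hx
  set y := PH * (1 - lamH') with hy
  have hx0 : 0 ≤ x := mul_nonneg hPL.le hL0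
  have hy0 : 0 ≤ y := mul_nonneg hPH.le (by linarith)
  have key1 : ∀ z : ℝ, PL * (lamL' * v1LA + (1 - lamL') * v1LR) +
      PH * (lamH' * v1HA + (1 - lamH') * v1HR) -
      (PL * (0 * v1LA + (1 - 0) * v1LR) + PH * (1 * v1HA + (1 - 1) * v1HR)) =
      x * (v1LA - v1LR) - y * (v1HA - v1HR) := by intro z; rw [hx, hy]; ring
  have key2 : ∀ z : ℝ, PL * (lamL' * v2LA + (1 - lamL') * v2LR) +
      PH * (lamH' * v2HA + (1 - lamH') * v2HR) -
      (PL * (0 * v2LA + (1 - 0) * v2LR) + PH * (1 * v2HA + (1 - 1) * v2HR)) =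
      y * (v2HR - v2HA) - x * (v2LR - v2LA) := by intro z; rw [hx, hy]; ring
  rw [key1 0, key2 0]
  constructor
  · intro h
    have hxpos : 0 < x := by nlinarith [mul_nonneg hy0 (by linarith : (0:ℝ) ≤ v1HA - v1HR)]
    have hxy : y < x := by nlinarith
    nlinarith [mul_pos hxpos (by linarith : (0:ℝ) < v2LR - v2LA)]
  · intro h
    have hypos : 0 < y := by nlinarith [mul_nonneg hx0 (by linarith : (0:ℝ) ≤ v2LR - v2LA)]
    have hxy : x < y := by nlinarith
    nlinarith [mul_pos hypos (by linarith : (0:ℝ) < v1HA - v1HR)]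
end

section
/- (No win-win, finite version.) Let B > 0 and δ > 0 be reals and let Δ ≥ B·δ. Let λ*_L, λ*_H, λ'_L, λ'_H ∈ [0,1] with λ*_L ≤ δ and λ*_H ≥ 1 − δ. Let t₁ be a candidate-friendly agent with utility v₁ and t₂ a candidate-unfriendly agent with utility v₂, where all utility values of both agents lie in the interval [0, B]. Then: (i) if u₁(λ'_L, λ'_H) − u₁(λ*_L, λ*_H) > Δ then u₂(λ'_L, λ'_H) − u₂(λ*_L, λ*_H) < 0; and (ii) if u₂(λ'_L, λ'_H) − u₂(λ*_L, λ*_H) > Δ then u₁(λ'_L, λ'_H) − u₁(λ*_L, λ*_H) < 0. Here uᵢ denotes the expected utility of agent tᵢ. -/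
/-- If the gain of an agent with positive value gaps exceeds `Δ ≥ B·δ` and `dH ≤ δ`,
then `dL > 0`. -/
lemma no_win_win_aux1 (PL PH dL dH a1 b1 Δ δ B : ℝ)
    (hPL : 0 < PL) (hPH : 0 < PH) (hP : PL + PH = 1) (hδ : 0 < δ) (hB : 0 < B)
    (hΔ : B * δ ≤ Δ) (ha1 : 0 < a1) (hb1 : 0 < b1) (hb1B : b1 ≤ B) (hdH : dH ≤ δ)
    (hgain : PL * dL * a1 + PH * dH * b1 > Δ) : 0 < dL := by
  have hsplit : B * δ = PL * (δ * B) + PH * (δ * B) := by linear_combination (-(δ * B)) * hP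
  have e1 : 0 ≤ PH * ((δ - dH) * b1) :=
    mul_nonneg hPH.le (mul_nonneg (by linarith) hb1.le)
  have e2 : 0 ≤ PH * (δ * (B - b1)) :=
    mul_nonneg hPH.le (mul_nonneg hδ.le (by linarith))
  have hkey : PL * (δ * B) < PL * dL * a1 := by linarith
  by_contra hc
  push_neg at hc
  have e3 : 0 ≤ PL * (-dL) * a1 :=
    mul_nonneg (mul_nonneg hPL.le (by linarith)) ha1.le
  have e4 : 0 < PL * (δ * B) := by positivity
  linarith

/-- Ratio argument: if `dL > 0` and the gain of an agent with gaps `a1 < b1` is positive,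
then the weighted combination with gaps `B2 < A2` (loss of the opposed agent) is positive. -/
lemma no_win_win_aux2 (PL PH dL dH a1 b1 A2 B2 : ℝ)
    (hPL : 0 < PL) (hPH : 0 < PH) (hdL : 0 < dL)
    (ha1 : 0 < a1) (hb1 : 0 < b1) (hab1 : a1 < b1)
    (hA2 : 0 < A2) (hB2 : 0 < B2) (hAB2 : B2 < A2)
    (hgain : 0 < PL * dL * a1 + PH * dH * b1) :
    0 < PL * dL * A2 + PH * dH * B2 := by
  rcases le_or_gt 0 dH with h | h
  · have e1 := mul_pos (mul_pos hPL hdL) hA2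
    have e2 := mul_nonneg (mul_nonneg hPH.le h) hB2.le
    linarith
  · have hQ : 0 < PH * (-dH) := mul_pos hPH (neg_pos.2 h)
    have hPp : 0 < PL * dL := mul_pos hPL hdL
    have h3 : PH * (-dH) * b1 < PL * dL * a1 := by linarith
    have h4 : PH * (-dH) < PL * dL := by
      by_contra hc
      push_neg at hc
      have e := mul_le_mul_of_nonneg_right hc hb1.le
      have e2 := mul_lt_mul_of_pos_left hab1 hPp
      linarith
    have e5 := mul_lt_mul_of_pos_right h4 hA2
    have e6 := mul_lt_mul_of_pos_left hAB2 hQ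
    linarith

/-- No win-win, finite version: if the truthful outcome probabilities satisfy `λ*_L ≤ δ` and
`λ*_H ≥ 1 − δ`, utilities are bounded by `B`, and `Δ ≥ B·δ`, then whenever a candidate-friendly
agent gains more than `Δ` from a deviation, every candidate-unfriendly agent strictly loses,
and vice versa. -/
theorem no_win_win_finite
    (PL PH : ℝ) (hPL : 0 < PL) (hPH : 0 < PH) (hP : PL + PH = 1)
    (B δ Δ : ℝ) (hB : 0 < B) (hδ : 0 < δ) (hΔ : B * δ ≤ Δ)
    (lamLs lamHs lamL' lamH' : ℝ)
    (hLs0 : 0 ≤ lamLs) (hLs1 : lamLs ≤ 1) (hHs0 : 0 ≤ lamHs) (hHs1 : lamHs ≤ 1)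
    (hL0 : 0 ≤ lamL') (hL1 : lamL' ≤ 1) (hH0 : 0 ≤ lamH') (hH1 : lamH' ≤ 1)
    (hLs : lamLs ≤ δ) (hHs : 1 - δ ≤ lamHs)
    (v1LA v1LR v1HA v1HR : ℝ)
    (h1 : v1HA > v1LA ∧ v1LA > v1LR ∧ v1LR > v1HR)
    (h1B : v1LA ∈ Set.Icc 0 B ∧ v1LR ∈ Set.Icc 0 B ∧ v1HA ∈ Set.Icc 0 B ∧ v1HR ∈ Set.Icc 0 B)
    (v2LA v2LR v2HA v2HR : ℝ)
    (h2 : v2LR > v2HR ∧ v2HR > v2HA ∧ v2HA > v2LA)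
    (h2B : v2LA ∈ Set.Icc 0 B ∧ v2LR ∈ Set.Icc 0 B ∧ v2HA ∈ Set.Icc 0 B ∧ v2HR ∈ Set.Icc 0 B) :
    (expUtility PL PH v1LA v1LR v1HA v1HR lamL' lamH'
        - expUtility PL PH v1LA v1LR v1HA v1HR lamLs lamHs > Δ →
      expUtility PL PH v2LA v2LR v2HA v2HR lamL' lamH'
        - expUtility PL PH v2LA v2LR v2HA v2HR lamLs lamHs < 0) ∧
    (expUtility PL PH v2LA v2LR v2HA v2HR lamL' lamH'
        - expUtility PL PH v2LA v2LR v2HA v2HR lamLs lamHs > Δ →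
      expUtility PL PH v1LA v1LR v1HA v1HR lamL' lamH'
        - expUtility PL PH v1LA v1LR v1HA v1HR lamLs lamHs < 0) := by
  obtain ⟨h1a, h1b, h1c⟩ := h1
  obtain ⟨h2a, h2b, h2c⟩ := h2
  obtain ⟨⟨_, hB1LA⟩, ⟨hL1LR, _⟩, ⟨_, hB1HA⟩, ⟨hL1HR, _⟩⟩ := h1B
  obtain ⟨⟨hL2LA, _⟩, ⟨_, hB2LR⟩, ⟨hL2HA, _⟩, ⟨_, hB2HR⟩⟩ := h2B
  set dL := lamL' - lamLs with hdL
  set dH := lamH' - lamHs with hdH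
  set a1 := v1LA - v1LR with ha1def
  set b1 := v1HA - v1HR with hb1def
  set A2 := v2LR - v2LA with hA2def
  set B2 := v2HR - v2HA with hB2def
  have ha1 : 0 < a1 := by simp only [ha1def]; linarith
  have hb1 : 0 < b1 := by simp only [hb1def]; linarith
  have hab1 : a1 < b1 := by simp only [ha1def, hb1def]; linarith
  have hA2 : 0 < A2 := by simp only [hA2def]; linarith
  have hB2 : 0 < B2 := by simp only [hB2def]; linarith
  have hAB2 : B2 < A2 := by simp only [hA2def, hB2def]; linarith
  have hb1B : b1 ≤ B := by simp only [hb1def]; linarith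
  have hA2B : A2 ≤ B := by simp only [hA2def]; linarith
  have key1 : expUtility PL PH v1LA v1LR v1HA v1HR lamL' lamH'
      - expUtility PL PH v1LA v1LR v1HA v1HR lamLs lamHs = PL * dL * a1 + PH * dH * b1 := by
    simp only [expUtility, hdL, hdH, ha1def, hb1def]; ring
  have key2 : expUtility PL PH v2LA v2LR v2HA v2HR lamL' lamH'
      - expUtility PL PH v2LA v2LR v2HA v2HR lamLs lamHs = -(PL * dL * A2 + PH * dH * B2) := by
    simp only [expUtility, hdL, hdH, hA2def, hB2def]; ring
  have hdLlow : -dL ≤ δ := by simp only [hdL]; linarith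
  have hdHhigh : dH ≤ δ := by simp only [hdH]; linarith
  constructor
  · intro hgain
    rw [key1] at hgain
    rw [key2]
    have hdLpos : 0 < dL :=
      no_win_win_aux1 PL PH dL dH a1 b1 Δ δ B hPL hPH hP hδ hB hΔ ha1 hb1 hb1B hdHhigh hgain
    have hpos : 0 < PL * dL * A2 + PH * dH * B2 := by
      apply no_win_win_aux2 PL PH dL dH a1 b1 A2 B2 hPL hPH hdLpos ha1 hb1 hab1 hA2 hB2 hAB2
      linarith [mul_pos hB hδ]
    linarith
  · intro hgain
    rw [key2] at hgain
    rw [key1]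
    have hgain' : PH * (-dH) * B2 + PL * (-dL) * A2 > Δ := by linarith
    have hdHneg : 0 < -dH :=
      no_win_win_aux1 PH PL (-dH) (-dL) B2 A2 Δ δ B hPH hPL (by linarith) hδ hB hΔ
        hB2 hA2 hA2B hdLlow hgain'
    have hpos : 0 < PH * (-dH) * b1 + PL * (-dL) * a1 :=
      no_win_win_aux2 PH PL (-dH) (-dL) B2 A2 b1 a1 hPH hPL hdHneg hB2 hA2 hAB2 hb1 ha1 hab1
        (by linarith [mul_pos hB hδ])
    linarith
end

section
/- (Small error rate implies no significant gain.) Let B > 0 and δ > 0 be reals. Let λ*_L, λ*_H, λ'_L, λ'_H ∈ [0,1] with λ*_L ≤ δ, λ*_H ≥ 1 − δ, and P_L·λ'_L + P_H·(1 − λ'_H) < (B+1)·δ. Then for every agent whose utility values lie in [0, B] and which is candidate-friendly, candidate-unfriendly, or contingent, its expected utility satisfies u(λ'_L, λ'_H) − u(λ*_L, λ*_H) < (B² + 2B)·δ. -/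
set_option maxHeartbeats 1000000 in
/-- Small error rate implies no significant gain: if the truthful outcome probabilities satisfy
`λ*_L ≤ δ`, `λ*_H ≥ 1 − δ` and the error rate of the deviating profile is below `(B+1)·δ`, then
every (candidate-friendly, candidate-unfriendly or contingent) agent with utilities in `[0, B]`
gains less than `(B² + 2B)·δ`. -/
theorem small_error_no_gain
    (PL PH : ℝ) (hPL : 0 < PL) (hPH : 0 < PH) (hP : PL + PH = 1)
    (B δ : ℝ) (hB : 0 < B) (hδ : 0 < δ)
    (lamLs lamHs lamL' lamH' : ℝ)
    (hLs0 : 0 ≤ lamLs) (hLs1 : lamLs ≤ 1) (hHs0 : 0 ≤ lamHs) (hHs1 : lamHs ≤ 1)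
    (hL0 : 0 ≤ lamL') (hL1 : lamL' ≤ 1) (hH0 : 0 ≤ lamH') (hH1 : lamH' ≤ 1)
    (hLs : lamLs ≤ δ) (hHs : 1 - δ ≤ lamHs)
    (herr : PL * lamL' + PH * (1 - lamH') < (B + 1) * δ)
    (vLA vLR vHA vHR : ℝ)
    (hvB : vLA ∈ Set.Icc 0 B ∧ vLR ∈ Set.Icc 0 B ∧ vHA ∈ Set.Icc 0 B ∧ vHR ∈ Set.Icc 0 B)
    (htype : (vHA > vLA ∧ vLA > vLR ∧ vLR > vHR) ∨
             (vLR > vHR ∧ vHR > vHA ∧ vHA > vLA) ∨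
             (vLR > vLA ∧ vHA > vHR)) :
    expUtility PL PH vLA vLR vHA vHR lamL' lamH'
      - expUtility PL PH vLA vLR vHA vHR lamLs lamHs < (B ^ 2 + 2 * B) * δ := by
  obtain ⟨⟨hA0,hA1⟩,⟨hR0,hR1⟩,⟨hHA0,hHA1⟩,⟨hHR0,hHR1⟩⟩ := hvB
  have hkey : expUtility PL PH vLA vLR vHA vHR lamL' lamH'
      - expUtility PL PH vLA vLR vHA vHR lamLs lamHs
      = PL * (lamL' - lamLs) * (vLA - vLR) + PH * (lamH' - lamHs) * (vHA - vHR) := by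
    simp only [expUtility]; ring
  rw [hkey]
  have hPH1 : PH ≤ 1 := by linarith
  have hPL1 : PL ≤ 1 := by linarith
  have hfin : (B + 1) * δ * B + δ * B = (B ^ 2 + 2 * B) * δ := by ring
  rcases htype with ⟨h1,h2,h3⟩ | ⟨h1,h2,h3⟩ | ⟨h1,h2⟩
  · -- vLA-vLR ≥ 0, vHA-vHR ≥ 0
    have k1 := mul_nonneg (mul_nonneg hPL.le hLs0) (by linarith : (0:ℝ) ≤ vLA - vLR)
    have k2 := mul_nonneg (mul_nonneg hPL.le hL0) (by linarith : (0:ℝ) ≤ B - (vLA - vLR))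
    have t1 : PL * (lamL' - lamLs) * (vLA - vLR) ≤ PL * lamL' * B := by
      have : PL * lamL' * B - PL * (lamL' - lamLs) * (vLA - vLR)
          = PL * lamLs * (vLA - vLR) + PL * lamL' * (B - (vLA - vLR)) := by ring
      linarith
    have k3 := mul_nonneg (mul_nonneg hPH.le (by linarith : (0:ℝ) ≤ δ - (1 - lamHs)))
        (by linarith : (0:ℝ) ≤ vHA - vHR)
    have k4 := mul_nonneg (mul_nonneg hPH.le hδ.le) (by linarith : (0:ℝ) ≤ B - (vHA - vHR))
    have k5 := mul_nonneg (mul_nonneg hPH.le (by linarith : (0:ℝ) ≤ 1 - lamH'))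
        (by linarith : (0:ℝ) ≤ vHA - vHR)
    have t2 : PH * (lamH' - lamHs) * (vHA - vHR) ≤ PH * δ * B := by
      have : PH * δ * B - PH * (lamH' - lamHs) * (vHA - vHR)
          = PH * (δ - (1 - lamHs)) * (vHA - vHR) + PH * δ * (B - (vHA - vHR))
            + PH * (1 - lamH') * (vHA - vHR) := by ring
      linarith
    have e0 : PL * lamL' < (B + 1) * δ := by
      have := mul_nonneg hPH.le (by linarith : (0:ℝ) ≤ 1 - lamH'); linarith
    have e1 : PL * lamL' * B < (B + 1) * δ * B := by
      exact mul_lt_mul_of_pos_right e0 hB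
    have e2 : PH * δ * B ≤ δ * B := by
      have := mul_nonneg (mul_nonneg hδ.le hB.le) (by linarith : (0:ℝ) ≤ 1 - PH)
      nlinarith
    linarith
  · -- both negative
    have t1 : PL * (lamL' - lamLs) * (vLA - vLR) ≤ PL * δ * B := by
      have k1 := mul_nonneg (mul_nonneg hPL.le hL0) (by linarith : (0:ℝ) ≤ vLR - vLA)
      have k2 := mul_nonneg (mul_nonneg hPL.le (by linarith : (0:ℝ) ≤ δ - lamLs))
          (by linarith : (0:ℝ) ≤ vLR - vLA)
      have k3 := mul_nonneg (mul_nonneg hPL.le hδ.le) (by linarith : (0:ℝ) ≤ B - (vLR - vLA))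
      have : PL * δ * B - PL * (lamL' - lamLs) * (vLA - vLR)
          = PL * lamL' * (vLR - vLA) + PL * (δ - lamLs) * (vLR - vLA)
            + PL * δ * (B - (vLR - vLA)) := by ring
      linarith
    have t2 : PH * (lamH' - lamHs) * (vHA - vHR) ≤ PH * (1 - lamH') * B := by
      have k1 := mul_nonneg (mul_nonneg hPH.le (by linarith : (0:ℝ) ≤ 1 - lamHs))
          (by linarith : (0:ℝ) ≤ vHR - vHA)
      have k2 := mul_nonneg (mul_nonneg hPH.le (by linarith : (0:ℝ) ≤ 1 - lamH'))
          (by linarith : (0:ℝ) ≤ B - (vHR - vHA))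
      have : PH * (1 - lamH') * B - PH * (lamH' - lamHs) * (vHA - vHR)
          = PH * (1 - lamHs) * (vHR - vHA) + PH * (1 - lamH') * (B - (vHR - vHA)) := by ring
      linarith
    have e0 : PH * (1 - lamH') < (B + 1) * δ := by
      have := mul_nonneg hPL.le hL0; linarith
    have e1 : PH * (1 - lamH') * B < (B + 1) * δ * B := mul_lt_mul_of_pos_right e0 hB
    have e2 : PL * δ * B ≤ δ * B := by
      have := mul_nonneg (mul_nonneg hδ.le hB.le) (by linarith : (0:ℝ) ≤ 1 - PL)
      nlinarith
    linarith
  · -- vLA-vLR ≤ 0, vHA-vHR ≥ 0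
    have t1 : PL * (lamL' - lamLs) * (vLA - vLR) ≤ PL * δ * B := by
      have k1 := mul_nonneg (mul_nonneg hPL.le hL0) (by linarith : (0:ℝ) ≤ vLR - vLA)
      have k2 := mul_nonneg (mul_nonneg hPL.le (by linarith : (0:ℝ) ≤ δ - lamLs))
          (by linarith : (0:ℝ) ≤ vLR - vLA)
      have k3 := mul_nonneg (mul_nonneg hPL.le hδ.le) (by linarith : (0:ℝ) ≤ B - (vLR - vLA))
      have : PL * δ * B - PL * (lamL' - lamLs) * (vLA - vLR)
          = PL * lamL' * (vLR - vLA) + PL * (δ - lamLs) * (vLR - vLA)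
            + PL * δ * (B - (vLR - vLA)) := by ring
      linarith
    have t2 : PH * (lamH' - lamHs) * (vHA - vHR) ≤ PH * δ * B := by
      have k3 := mul_nonneg (mul_nonneg hPH.le (by linarith : (0:ℝ) ≤ δ - (1 - lamHs)))
          (by linarith : (0:ℝ) ≤ vHA - vHR)
      have k4 := mul_nonneg (mul_nonneg hPH.le hδ.le) (by linarith : (0:ℝ) ≤ B - (vHA - vHR))
      have k5 := mul_nonneg (mul_nonneg hPH.le (by linarith : (0:ℝ) ≤ 1 - lamH'))
          (by linarith : (0:ℝ) ≤ vHA - vHR)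
      have : PH * δ * B - PH * (lamH' - lamHs) * (vHA - vHR)
          = PH * (δ - (1 - lamHs)) * (vHA - vHR) + PH * δ * (B - (vHA - vHR))
            + PH * (1 - lamH') * (vHA - vHR) := by ring
      linarith
    have e2 : PL * δ * B + PH * δ * B = δ * B := by
      have : PL * δ * B + PH * δ * B = (PL + PH) * (δ * B) := by ring
      rw [this, hP]; ring
    have e3 : δ * B < (B ^ 2 + 2 * B) * δ := by
      have h1 : (0:ℝ) < B * B * δ := by positivity
      have h2 : (0:ℝ) < B * δ := by positivity
      have h3 : (B ^ 2 + 2 * B) * δ - δ * B = B * B * δ + B * δ := by ring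
      linarith
    linarith
end

section
/- (Contingent agents strictly lose under a large error rate.) Let B ≥ 1 and δ > 0 be reals. Let λ*_L, λ*_H, λ'_L, λ'_H ∈ [0,1] with λ*_L ≤ δ, λ*_H ≥ 1 − δ, and P_L·λ'_L + P_H·(1 − λ'_H) ≥ (B+1)·δ. Then for every contingent agent whose utility values lie in [0, B] and satisfy v(L,R) − v(L,A) ≥ 1 and v(H,A) − v(H,R) ≥ 1, its expected utility satisfies u(λ'_L, λ'_H) − u(λ*_L, λ*_H) < 0. -/
/-- Contingent agents strictly lose under a large error rate: if the truthful outcome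
probabilities satisfy `λ*_L ≤ δ`, `λ*_H ≥ 1 − δ` and the error rate of the deviating profile is
at least `(B+1)·δ`, then every contingent agent with utilities in `[0, B]` and preference gaps
at least `1` strictly loses. -/
theorem contingent_lose_large_error
    (PL PH : ℝ) (hPL : 0 < PL) (hPH : 0 < PH) (hP : PL + PH = 1)
    (B δ : ℝ) (hB : 1 ≤ B) (hδ : 0 < δ)
    (lamLs lamHs lamL' lamH' : ℝ)
    (hLs0 : 0 ≤ lamLs) (hLs1 : lamLs ≤ 1) (hHs0 : 0 ≤ lamHs) (hHs1 : lamHs ≤ 1)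
    (hL0 : 0 ≤ lamL') (hL1 : lamL' ≤ 1) (hH0 : 0 ≤ lamH') (hH1 : lamH' ≤ 1)
    (hLs : lamLs ≤ δ) (hHs : 1 - δ ≤ lamHs)
    (herr : (B + 1) * δ ≤ PL * lamL' + PH * (1 - lamH'))
    (vLA vLR vHA vHR : ℝ)
    (hvB : vLA ∈ Set.Icc 0 B ∧ vLR ∈ Set.Icc 0 B ∧ vHA ∈ Set.Icc 0 B ∧ vHR ∈ Set.Icc 0 B)
    (hcontingent : vLR > vLA ∧ vHA > vHR)
    (hgapL : 1 ≤ vLR - vLA) (hgapH : 1 ≤ vHA - vHR) :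
    expUtility PL PH vLA vLR vHA vHR lamL' lamH'
      - expUtility PL PH vLA vLR vHA vHR lamLs lamHs < 0 := by
  obtain ⟨⟨h1,h2⟩,⟨h3,h4⟩,⟨h5,h6⟩,⟨h7,h8⟩⟩ := hvB
  unfold expUtility
  nlinarith [mul_nonneg hPL.le hL0, mul_nonneg hPH.le (sub_nonneg.2 hH1),
    mul_le_mul_of_nonneg_left hgapL (mul_nonneg hPL.le hL0),
    mul_le_mul_of_nonneg_left hgapH (mul_nonneg hPH.le (sub_nonneg.2 hH1)),
    mul_nonneg hPL.le hLs0, mul_nonneg hPH.le (sub_nonneg.2 hHs1),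
    mul_le_mul (show PL * lamLs ≤ PL * δ from mul_le_mul_of_nonneg_left hLs hPL.le) (show vLR - vLA ≤ B by linarith) (by linarith) (by nlinarith),
    mul_le_mul (show PH * (1 - lamHs) ≤ PH * δ from mul_le_mul_of_nonneg_left (by linarith) hPH.le) (show vHA - vHR ≤ B by linarith) (by linarith) (by nlinarith)]
end

section
/- (Neither predetermined type is a majority, non-binary worlds.) Let T be an odd positive integer and consider T agents and worlds 1, …, N, where each agent t has a utility function v_t : {1,…,N} × {A,R} → ℝ such that v_t(n,A) is strictly increasing in n, v_t(n,R) is strictly decreasing in n, and v_t(n,A) ≠ v_t(n,R) for every world n. For a world n, let α_n^A be the fraction of agents t with v_t(n,A) > v_t(n,R). Then the number of candidate-friendly agents — agents t for which there exists a world n with α_n^A < 1/2 and v_t(n,A) > v_t(n,R) — is strictly less than T/2, and the number of candidate-unfriendly agents — agents t for which there exists a world n with α_n^A > 1/2 and v_t(n,R) > v_t(n,A) — is strictly less than T/2. -/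
open Classical

/-- Neither predetermined type is a majority (non-binary worlds): with an odd number `T` of
agents over worlds `1, …, N`, where each agent's utility for `A` is strictly increasing and for
`R` strictly decreasing in the world, with strict preference everywhere, the candidate-friendly
agents and the candidate-unfriendly agents each make up strictly less than half the agents. -/
theorem predetermined_minority
    (T N : ℕ) (hT : Odd T) (hTpos : 0 < T) (hN : 1 ≤ N)
    (vA vR : Fin T → ℕ → ℝ)
    (hmono : ∀ t, StrictMonoOn (vA t) (Set.Icc 1 N))
    (hanti : ∀ t, StrictAntiOn (vR t) (Set.Icc 1 N))
    (hne : ∀ t, ∀ n ∈ Finset.Icc 1 N, vA t n ≠ vR t n) :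
    2 * (Finset.univ.filter (fun t : Fin T => ∃ n ∈ Finset.Icc 1 N,
        2 * (Finset.univ.filter (fun t' : Fin T => vR t' n < vA t' n)).card < T ∧
          vR t n < vA t n)).card < T ∧
    2 * (Finset.univ.filter (fun t : Fin T => ∃ n ∈ Finset.Icc 1 N,
        T < 2 * (Finset.univ.filter (fun t' : Fin T => vR t' n < vA t' n)).card ∧
          vA t n < vR t n)).card < T := by
  classical
  have hprefA : ∀ t, ∀ n ∈ Finset.Icc 1 N, ∀ m ∈ Finset.Icc 1 N, n ≤ m →
      vR t n < vA t n → vR t m < vA t m := by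
    intro t n hn m hm hnm h
    rcases eq_or_lt_of_le hnm with rfl | hlt
    · exact h
    · simp only [Finset.mem_Icc] at hn hm
      have h1 : vA t n < vA t m := hmono t ⟨hn.1, hn.2⟩ ⟨hm.1, hm.2⟩ hlt
      have h2 : vR t m < vR t n := hanti t ⟨hn.1, hn.2⟩ ⟨hm.1, hm.2⟩ hlt
      linarith
  have hprefR : ∀ t, ∀ n ∈ Finset.Icc 1 N, ∀ m ∈ Finset.Icc 1 N, m ≤ n →
      vA t n < vR t n → vA t m < vR t m := by
    intro t n hn m hm hnm h
    rcases eq_or_lt_of_le hnm with rfl | hlt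
    · exact h
    · simp only [Finset.mem_Icc] at hn hm
      have h1 : vA t m < vA t n := hmono t ⟨hm.1, hm.2⟩ ⟨hn.1, hn.2⟩ hlt
      have h2 : vR t n < vR t m := hanti t ⟨hm.1, hm.2⟩ ⟨hn.1, hn.2⟩ hlt
      linarith
  constructor
  · by_cases hex : (((Finset.Icc 1 N)).filter
        (fun n => 2 * (Finset.univ.filter (fun t' : Fin T => vR t' n < vA t' n)).card < T)).Nonempty
    · set Q := ((Finset.Icc 1 N)).filter
        (fun n => 2 * (Finset.univ.filter (fun t' : Fin T => vR t' n < vA t' n)).card < T) with hQ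
      set m := Q.max' hex with hm
      have hmQ : m ∈ Q := Q.max'_mem hex
      simp only [hQ, Finset.mem_filter] at hmQ
      have hsub : (Finset.univ.filter (fun t : Fin T => ∃ n ∈ Finset.Icc 1 N,
          2 * (Finset.univ.filter (fun t' : Fin T => vR t' n < vA t' n)).card < T ∧
            vR t n < vA t n)) ⊆
          Finset.univ.filter (fun t' : Fin T => vR t' m < vA t' m) := by
        intro t ht
        simp only [Finset.mem_filter, Finset.mem_univ, true_and] at ht ⊢
        obtain ⟨n, hn, hc, hp⟩ := ht
        have hnQ : n ∈ Q := by simp [hQ, hn, hc]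
        exact hprefA t n hn m hmQ.1 (Q.le_max' n hnQ) hp
      have := Finset.card_le_card hsub
      omega
    · have hempty : (Finset.univ.filter (fun t : Fin T => ∃ n ∈ Finset.Icc 1 N,
          2 * (Finset.univ.filter (fun t' : Fin T => vR t' n < vA t' n)).card < T ∧
            vR t n < vA t n)) = ∅ := by
        rw [Finset.eq_empty_iff_forall_notMem]
        intro t ht
        simp only [Finset.mem_filter, Finset.mem_univ, true_and] at ht
        obtain ⟨n, hn, hc, -⟩ := ht
        exact hex ⟨n, Finset.mem_filter.mpr ⟨hn, hc⟩⟩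
      rw [hempty]
      simpa using hTpos
  · by_cases hex : (((Finset.Icc 1 N)).filter
        (fun n => T < 2 * (Finset.univ.filter (fun t' : Fin T => vR t' n < vA t' n)).card)).Nonempty
    · set Q := ((Finset.Icc 1 N)).filter
        (fun n => T < 2 * (Finset.univ.filter (fun t' : Fin T => vR t' n < vA t' n)).card) with hQ
      set m := Q.min' hex with hm
      have hmQ : m ∈ Q := Q.min'_mem hex
      simp only [hQ, Finset.mem_filter] at hmQ
      have hsub : (Finset.univ.filter (fun t : Fin T => ∃ n ∈ Finset.Icc 1 N,
          T < 2 * (Finset.univ.filter (fun t' : Fin T => vR t' n < vA t' n)).card ∧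
            vA t n < vR t n)) ⊆
          Finset.univ.filter (fun t' : Fin T => vA t' m < vR t' m) := by
        intro t ht
        simp only [Finset.mem_filter, Finset.mem_univ, true_and] at ht ⊢
        obtain ⟨n, hn, hc, hp⟩ := ht
        have hnQ : n ∈ Q := by simp [hQ, hn, hc]
        exact hprefR t n hn m hmQ.1 (Q.min'_le n hnQ) hp
      have hcard := Finset.card_le_card hsub
      have hdisj : Disjoint (Finset.univ.filter (fun t' : Fin T => vA t' m < vR t' m))
          (Finset.univ.filter (fun t' : Fin T => vR t' m < vA t' m)) := by
        rw [Finset.disjoint_filter]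
        intro t _ h1 h2
        exact lt_asymm h1 h2
      have hunion := Finset.card_union_of_disjoint hdisj
      have hle : ((Finset.univ.filter (fun t' : Fin T => vA t' m < vR t' m)) ∪
          (Finset.univ.filter (fun t' : Fin T => vR t' m < vA t' m))).card ≤ T := by
        have := Finset.card_le_card (Finset.subset_univ
          ((Finset.univ.filter (fun t' : Fin T => vA t' m < vR t' m)) ∪
          (Finset.univ.filter (fun t' : Fin T => vR t' m < vA t' m))))
        simpa using this
      omega
    · have hempty : (Finset.univ.filter (fun t : Fin T => ∃ n ∈ Finset.Icc 1 N,
          T < 2 * (Finset.univ.filter (fun t' : Fin T => vR t' n < vA t' n)).card ∧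
            vA t n < vR t n)) = ∅ := by
        rw [Finset.eq_empty_iff_forall_notMem]
        intro t ht
        simp only [Finset.mem_filter, Finset.mem_univ, true_and] at ht
        obtain ⟨n, hn, hc, -⟩ := ht
        exact hex ⟨n, Finset.mem_filter.mpr ⟨hn, hc⟩⟩
      rw [hempty]
      simpa using hTpos
end

section
/- (No win-win, non-binary worlds.) Let worlds be 1, …, N with prior probabilities P_1, …, P_N > 0 summing to 1, and let H₀ with 2 ≤ H₀ ≤ N be the majority threshold: the majority prefers alternative R in worlds n < H₀ and alternative A in worlds n ≥ H₀. Let λ* be defined by λ*_n = 1 for n ≥ H₀ and λ*_n = 0 for n < H₀, and let λ'_n ∈ [0,1] for every n. Let t₁ and t₂ be agents whose utilities v₁, v₂ satisfy: vᵢ(n,A) is strictly increasing in n and vᵢ(n,R) is strictly decreasing in n; t₁ is candidate-friendly, i.e. v₁(H₀−1, A) > v₁(H₀−1, R); and t₂ is candidate-unfriendly, i.e. v₂(H₀, R) > v₂(H₀, A). Then: (i) if u(v₁, λ') > u(v₁, λ*) then u(v₂, λ') < u(v₂, λ*); and (ii) if u(v₂, λ') > u(v₂, λ*) then u(v₁,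 λ') < u(v₁, λ*). -/
/-- Expected utility with worlds `1, …, N`: outcome probabilities `lam n` of alternative `A`. -/
def expUtilityN (N : ℕ) (P vA vR lam : ℕ → ℝ) : ℝ :=
  ∑ n ∈ Finset.Icc 1 N, P n * (lam n * vA n + (1 - lam n) * vR n)

/-- No win-win, non-binary worlds: with the truthful limit outcome `λ*_n = 1` for `n ≥ H₀` and
`λ*_n = 0` for `n < H₀`, a candidate-friendly agent `t₁` and a candidate-unfriendly agent `t₂`
cannot both gain from a deviation: if one strictly gains, the other strictly loses. -/
theorem no_win_win_nonbinary
    (N : ℕ) (P : ℕ → ℝ)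
    (hP : ∀ n ∈ Finset.Icc 1 N, 0 < P n) (hPsum : ∑ n ∈ Finset.Icc 1 N, P n = 1)
    (H0 : ℕ) (hH0 : 2 ≤ H0) (hH0N : H0 ≤ N)
    (lam' : ℕ → ℝ) (hlam' : ∀ n ∈ Finset.Icc 1 N, lam' n ∈ Set.Icc (0 : ℝ) 1)
    (v1A v1R v2A v2R : ℕ → ℝ)
    (h1mono : StrictMonoOn v1A (Set.Icc 1 N)) (h1anti : StrictAntiOn v1R (Set.Icc 1 N))
    (h2mono : StrictMonoOn v2A (Set.Icc 1 N)) (h2anti : StrictAntiOn v2R (Set.Icc 1 N))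
    (h1friendly : v1A (H0 - 1) > v1R (H0 - 1))
    (h2unfriendly : v2R H0 > v2A H0) :
    (expUtilityN N P v1A v1R lam' >
        expUtilityN N P v1A v1R (fun n => if H0 ≤ n then 1 else 0) →
      expUtilityN N P v2A v2R lam' <
        expUtilityN N P v2A v2R (fun n => if H0 ≤ n then 1 else 0)) ∧
    (expUtilityN N P v2A v2R lam' >
        expUtilityN N P v2A v2R (fun n => if H0 ≤ n then 1 else 0) →
      expUtilityN N P v1A v1R lam' <
        expUtilityN N P v1A v1R (fun n => if H0 ≤ n then 1 else 0)) := by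
  set lamS : ℕ → ℝ := fun n => if H0 ≤ n then 1 else 0 with hlamS
  -- difference of expected utilities
  have key : ∀ vA vR : ℕ → ℝ,
      expUtilityN N P vA vR lam' - expUtilityN N P vA vR lamS
        = ∑ n ∈ Finset.Icc 1 N, P n * ((lam' n - lamS n) * (vA n - vR n)) := by
    intro vA vR
    rw [expUtilityN, expUtilityN, ← Finset.sum_sub_distrib]
    exact Finset.sum_congr rfl fun n _ => by ring
  set α : ℝ := v2R H0 - v2A H0 with hα
  set β : ℝ := v1A H0 - v1R H0 with hβ
  have hαpos : 0 < α := sub_pos.mpr h2unfriendly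
  have hH0mem : H0 ∈ Set.Icc 1 N := ⟨le_trans one_le_two hH0, hH0N⟩
  have hH1mem : H0 - 1 ∈ Set.Icc 1 N := ⟨Nat.le_sub_one_of_lt hH0, le_trans (Nat.sub_le _ _) hH0N⟩
  have hH1lt : H0 - 1 < H0 := Nat.sub_lt (by omega) one_pos
  have hβpos : 0 < β := by
    have h1 := h1mono hH1mem hH0mem hH1lt
    have h2 := h1anti hH1mem hH0mem hH1lt
    simp only [hβ]; linarith
  -- the key combined inequality
  have main : α * (expUtilityN N P v1A v1R lam' - expUtilityN N P v1A v1R lamS)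
      + β * (expUtilityN N P v2A v2R lam' - expUtilityN N P v2A v2R lamS) ≤ 0 := by
    rw [key v1A v1R, key v2A v2R, Finset.mul_sum, Finset.mul_sum, ← Finset.sum_add_distrib]
    apply Finset.sum_nonpos
    intro n hn
    have hnset : n ∈ Set.Icc 1 N := by
      rw [Finset.mem_Icc] at hn; exact ⟨hn.1, hn.2⟩
    have hPn := hP n hn
    have hlamn := hlam' n hn
    have hrw : α * (P n * ((lam' n - lamS n) * (v1A n - v1R n)))
        + β * (P n * ((lam' n - lamS n) * (v2A n - v2R n)))
        = P n * ((lam' n - lamS n) * (α * (v1A n - v1R n) + β * (v2A n - v2R n))) := by ring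
    rw [hrw]
    rcases lt_or_ge n H0 with h | h
    · -- n < H0 : lamS n = 0, combination f n < 0, lam' n ≥ 0
      have hS : lamS n = 0 := by simp [hlamS, Nat.not_le.mpr h]
      have hd1 : v1A n - v1R n < v1A H0 - v1R H0 := by
        have := h1mono hnset hH0mem h
        have := h1anti hnset hH0mem h
        linarith
      have hd2 : v2A n - v2R n < v2A H0 - v2R H0 := by
        have := h2mono hnset hH0mem h
        have := h2anti hnset hH0mem h
        linarith
      have hf : α * (v1A n - v1R n) + β * (v2A n - v2R n) ≤ 0 := by
        have h1 : α * (v1A n - v1R n) < α * (v1A H0 - v1R H0) :=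
          (mul_lt_mul_iff_right₀ hαpos).mpr hd1
        have h2 : β * (v2A n - v2R n) < β * (v2A H0 - v2R H0) :=
          (mul_lt_mul_iff_right₀ hβpos).mpr hd2
        have hzero : α * (v1A H0 - v1R H0) + β * (v2A H0 - v2R H0) = 0 := by
          simp only [hα, hβ]; ring
        linarith
      have hmu : 0 ≤ lam' n - lamS n := by rw [hS]; simpa using hlamn.1
      have : (lam' n - lamS n) * (α * (v1A n - v1R n) + β * (v2A n - v2R n)) ≤ 0 :=
        mul_nonpos_of_nonneg_of_nonpos hmu hf
      exact mul_nonpos_of_nonneg_of_nonpos hPn.le this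
    · -- H0 ≤ n : lamS n = 1, combination f n ≥ 0, lam' n ≤ 1
      have hS : lamS n = 1 := by simp [hlamS, h]
      have hd1 : v1A H0 - v1R H0 ≤ v1A n - v1R n := by
        have h1 := (h1mono.monotoneOn) hH0mem hnset h
        have h2 := (h1anti.antitoneOn) hH0mem hnset h
        linarith
      have hd2 : v2A H0 - v2R H0 ≤ v2A n - v2R n := by
        have h1 := (h2mono.monotoneOn) hH0mem hnset h
        have h2 := (h2anti.antitoneOn) hH0mem hnset h
        linarith
      have hf : 0 ≤ α * (v1A n - v1R n) + β * (v2A n - v2R n) := by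
        have h1 : α * (v1A H0 - v1R H0) ≤ α * (v1A n - v1R n) :=
          mul_le_mul_of_nonneg_left hd1 hαpos.le
        have h2 : β * (v2A H0 - v2R H0) ≤ β * (v2A n - v2R n) :=
          mul_le_mul_of_nonneg_left hd2 hβpos.le
        have hzero : α * (v1A H0 - v1R H0) + β * (v2A H0 - v2R H0) = 0 := by
          simp only [hα, hβ]; ring
        linarith
      have hmu : lam' n - lamS n ≤ 0 := by rw [hS]; simpa using sub_nonpos.mpr hlamn.2
      have : (lam' n - lamS n) * (α * (v1A n - v1R n) + β * (v2A n - v2R n)) ≤ 0 :=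
        mul_nonpos_of_nonpos_of_nonneg hmu hf
      exact mul_nonpos_of_nonneg_of_nonpos hPn.le this
  constructor
  · intro h1
    nlinarith [main, hαpos, hβpos]
  · intro h2
    nlinarith [main, hαpos, hβpos]
end

section
/- (Key inequality with non-binary signals and binary worlds.) Let there be two worlds L and H with prior probabilities P_L, P_H > 0, P_L + P_H = 1, and M ≥ 2 signals 1, …, M with conditional probabilities P_{mL} > 0 and P_{mH} > 0 for every m, Σ_{m=1}^{M} P_{mL} = Σ_{m=1}^{M} P_{mH} = 1, and positive correlation: for every signal m with 2 ≤ m ≤ M, Σ_{m'=m}^{M} P_{m'H} > Σ_{m'=m}^{M} P_{m'L}. Fix an integer threshold s with 1 ≤ s < M and define P_{hL} = Σ_{m>s} P_{mL}, P_{hH} = Σ_{m>s} P_{mH}, and for each signal m, T_{hm} = (P_L·P_{mL}·P_{hL} + P_H·P_{mH}·P_{hH}) / (P_L·P_{mL} + P_H·P_{mH}). Then for every signal m ∈ {1, …, M}: P_{hL} < T_{hm} < P_{hH}. -/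
/-- Key inequality with non-binary signals and binary worlds: for an agent who received any
signal `m`, the posterior probability `T_{hm}` that another agent receives a signal above the
threshold `s` lies strictly between `P_{hL}` and `P_{hH}`. -/
theorem key_inequality_nonbinary_signals
    (PL PH : ℝ) (hPL : 0 < PL) (hPH : 0 < PH) (hP : PL + PH = 1)
    (M : ℕ) (hM : 2 ≤ M)
    (PmL PmH : ℕ → ℝ)
    (hPmL : ∀ m ∈ Finset.Icc 1 M, 0 < PmL m) (hPmH : ∀ m ∈ Finset.Icc 1 M, 0 < PmH m)
    (hsumL : ∑ m ∈ Finset.Icc 1 M, PmL m = 1) (hsumH : ∑ m ∈ Finset.Icc 1 M, PmH m = 1)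
    (hcorr : ∀ m, 2 ≤ m → m ≤ M →
      ∑ m' ∈ Finset.Icc m M, PmL m' < ∑ m' ∈ Finset.Icc m M, PmH m')
    (s : ℕ) (hs1 : 1 ≤ s) (hsM : s < M) :
    ∀ m ∈ Finset.Icc 1 M,
      ∑ m' ∈ Finset.Icc (s + 1) M, PmL m' <
        (PL * PmL m * (∑ m' ∈ Finset.Icc (s + 1) M, PmL m') +
          PH * PmH m * (∑ m' ∈ Finset.Icc (s + 1) M, PmH m')) /
          (PL * PmL m + PH * PmH m) ∧
      (PL * PmL m * (∑ m' ∈ Finset.Icc (s + 1) M, PmL m') +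
          PH * PmH m * (∑ m' ∈ Finset.Icc (s + 1) M, PmH m')) /
          (PL * PmL m + PH * PmH m) <
        ∑ m' ∈ Finset.Icc (s + 1) M, PmH m' := by
  intro m hm
  have ha : 0 < PL * PmL m := mul_pos hPL (hPmL m hm)
  have hb : 0 < PH * PmH m := mul_pos hPH (hPmH m hm)
  have hxy : ∑ m' ∈ Finset.Icc (s + 1) M, PmL m' < ∑ m' ∈ Finset.Icc (s + 1) M, PmH m' :=
    hcorr (s + 1) (by omega) (by omega)
  have hab : 0 < PL * PmL m + PH * PmH m := by linarith
  constructor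
  · rw [lt_div_iff₀ hab]; nlinarith
  · rw [div_lt_iff₀ hab]; nlinarith
end

section
/- For every Borel measurable set s ⊆ ℝ, |N(0, 5/36)(s) − N(0, 1/12)(s)| < 0.12295, where N(0, v) denotes the Gaussian probability measure on ℝ with mean 0 and variance v. Equivalently, the total variation distance between the centered Gaussian measures with variances 5/36 and 1/12 is less than 0.12295. -/
open MeasureTheory ProbabilityTheory Real Set Finset
open scoped NNReal Nat

/-!
Write `μ = N(0, 5/36)` and `ν = N(0, 1/12)` with densities `f` and `g`. Then `f ≤ g` exactly on
`|x| ≤ x₀`, where `(24/5) x₀² = log (5/3)`. Bracketing `x₀` between `a = 0.326223` and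
`b = 0.326224` (checked with Taylor bounds for `exp`) gives `|μ s - ν s| ≤ ν [-b, b] - μ [-a, a]`
for every Borel set `s`, and both probabilities are evaluated by integrating the first eight terms
of the Taylor series of `exp (-c x²)`. The true distance is `0.1229376…`, so every constant has to
be accurate to about `10⁻⁶`.
-/

section TotalVariation

variable {Ω : Type*} [MeasurableSpace Ω] {μ ν : Measure Ω} [IsProbabilityMeasure μ]
  [IsProbabilityMeasure ν] {A B s : Set Ω}

lemma measureReal_sub_measureReal_le_of_restrict_le (hs : MeasurableSet s)
    (hA : MeasurableSet A) (hB : MeasurableSet B) (hAB : A ⊆ B)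
    (hμν : μ.restrict A ≤ ν.restrict A) (hνμ : ν.restrict Bᶜ ≤ μ.restrict Bᶜ) :
    ν.real s - μ.real s ≤ ν.real B - μ.real A := by
  have le_of_restrict_le {ρ₁ ρ₂ : Measure Ω} [IsFiniteMeasure ρ₂] {C t : Set Ω}
      (h : ρ₁.restrict C ≤ ρ₂.restrict C) (ht : t ⊆ C) : ρ₁.real t ≤ ρ₂.real t := by
    have := Measure.le_iff'.mp h t
    rw [Measure.restrict_eq_self _ ht, Measure.restrict_eq_self _ ht] at this
    exact ENNReal.toReal_mono (measure_ne_top _ _) this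
  have hν_s := measureReal_inter_add_sdiff (μ := ν) (s := s) hB
  have hμ_s := measureReal_inter_add_sdiff (μ := μ) (s := s) hA
  have hν_B := measureReal_inter_add_sdiff (μ := ν) (s := B) hs
  have hμ_A := measureReal_inter_add_sdiff (μ := μ) (s := A) hs
  have outside_B : ν.real (s \ B) ≤ μ.real (s \ B) :=
    le_of_restrict_le hνμ fun _ hx => hx.2
  have inside_A : μ.real (A \ s) ≤ ν.real (A \ s) :=
    le_of_restrict_le hμν sdiff_subset
  have mono_μ : μ.real (s \ B) ≤ μ.real (s \ A) := measureReal_mono (sdiff_subset_sdiff_right hAB)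
  have mono_ν : ν.real (A \ s) ≤ ν.real (B \ s) := measureReal_mono (sdiff_subset_sdiff_left hAB)
  rw [inter_comm] at hν_B hμ_A
  linarith

lemma abs_measureReal_sub_measureReal_le_of_restrict_le (hs : MeasurableSet s)
    (hA : MeasurableSet A) (hB : MeasurableSet B) (hAB : A ⊆ B)
    (hμν : μ.restrict A ≤ ν.restrict A) (hνμ : ν.restrict Bᶜ ≤ μ.restrict Bᶜ) :
    |μ.real s - ν.real s| ≤ ν.real B - μ.real A := by
  have h := measureReal_sub_measureReal_le_of_restrict_le hs hA hB hAB hμν hνμ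
  have hc := measureReal_sub_measureReal_le_of_restrict_le hs.compl hA hB hAB hμν hνμ
  rw [probReal_compl_eq_one_sub hs, probReal_compl_eq_one_sub hs] at hc
  exact abs_le.mpr ⟨by linarith, by linarith⟩

end TotalVariation

lemma gaussianReal_restrict_le_restrict {m₁ m₂ : ℝ} {v₁ v₂ : ℝ≥0} (hv₁ : v₁ ≠ 0) (hv₂ : v₂ ≠ 0)
    {A : Set ℝ} (hA : MeasurableSet A)
    (h : ∀ x ∈ A, gaussianPDFReal m₁ v₁ x ≤ gaussianPDFReal m₂ v₂ x) :
    (gaussianReal m₁ v₁).restrict A ≤ (gaussianReal m₂ v₂).restrict A := by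
  rw [gaussianReal_of_var_ne_zero _ hv₁, gaussianReal_of_var_ne_zero _ hv₂,
    restrict_withDensity hA, restrict_withDensity hA]
  exact withDensity_mono <| (ae_restrict_iff' hA).mpr <|
    ae_of_all _ fun x hx => ENNReal.ofReal_le_ofReal (h x hx)

lemma gaussianPDFReal_sq {m : ℝ} {v : ℝ≥0} (x : ℝ) :
    gaussianPDFReal m v x ^ 2 = (2 * π * v)⁻¹ * rexp (-(x - m) ^ 2 / v) := by
  rw [gaussianPDFReal, mul_pow, inv_pow, sq_sqrt (by positivity), ← exp_nat_mul]
  congr 2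
  by_cases hv : (v : ℝ) = 0
  · simp [hv]
  · field_simp
    ring

lemma gaussianPDFReal_le_gaussianPDFReal_iff {m x : ℝ} {v w : ℝ≥0} (hv : v ≠ 0) (hw : w ≠ 0) :
    gaussianPDFReal m v x ≤ gaussianPDFReal m w x ↔
      rexp ((x - m) ^ 2 * ((w : ℝ)⁻¹ - (v : ℝ)⁻¹)) ≤ v / w := by
  have hv' : (0 : ℝ) < v := by positivity
  have hw' : (0 : ℝ) < w := by positivity
  rw [← pow_le_pow_iff_left₀ (gaussianPDFReal_nonneg _ _ _) (gaussianPDFReal_nonneg _ _ _)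
    two_ne_zero, gaussianPDFReal_sq, gaussianPDFReal_sq,
    show (x - m) ^ 2 * ((w : ℝ)⁻¹ - (v : ℝ)⁻¹) = -(x - m) ^ 2 / v - -(x - m) ^ 2 / w by ring,
    exp_sub, div_le_div_iff₀ (exp_pos _) hw', inv_mul_eq_div, inv_mul_eq_div,
    div_le_div_iff₀ (by positivity) (by positivity)]
  set Ev := rexp (-(x - m) ^ 2 / v)
  set Ew := rexp (-(x - m) ^ 2 / w)
  rw [show Ev * (2 * π * w) = 2 * π * (Ev * w) by ring,
    show Ew * (2 * π * v) = 2 * π * (v * Ew) by ring, mul_le_mul_iff_of_pos_left (by positivity)]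

lemma gaussianReal_real_eq_setIntegral (m : ℝ) {v : ℝ≥0} (hv : v ≠ 0) (s : Set ℝ) :
    (gaussianReal m v).real s = ∫ x in s, gaussianPDFReal m v x := by
  rw [measureReal_def, gaussianReal_apply_eq_integral _ hv,
    ENNReal.toReal_ofReal (integral_nonneg fun x => gaussianPDFReal_nonneg _ _ _)]

lemma gaussianReal_real_Icc_neg {v : ℝ≥0} (hv : v ≠ 0) {a : ℝ} (ha : 0 ≤ a) :
    (gaussianReal 0 v).real (Icc (-a) a) =
      (√(2 * π * v))⁻¹ * ∫ x in -a..a, rexp (-((2 * v : ℝ)⁻¹ * x ^ 2)) := by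
  rw [gaussianReal_real_eq_setIntegral 0 hv, integral_Icc_eq_integral_Ioc,
    ← intervalIntegral.integral_of_le (by linarith), ← intervalIntegral.integral_const_mul]
  congr with x
  rw [gaussianPDFReal, sub_zero, neg_div, div_eq_inv_mul]

lemma abs_integral_exp_neg_mul_sq_sub_sum_le {n : ℕ} (hn : 0 < n) {c a : ℝ} (hc : 0 ≤ c)
    (ha : 0 ≤ a) (hca : c * a ^ 2 ≤ 1) :
    |(∫ x in -a..a, rexp (-(c * x ^ 2))) -
        ∑ i ∈ range n, (-c) ^ i / i ! * (2 * a ^ (2 * i + 1) / (2 * i + 1))|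
      ≤ (c * a ^ 2) ^ n * (n.succ / (n ! * n)) * (2 * a) := by
  have taylor_integral : ∫ x in -a..a, ∑ i ∈ range n, (-(c * x ^ 2)) ^ i / i ! =
      ∑ i ∈ range n, (-c) ^ i / i ! * (2 * a ^ (2 * i + 1) / (2 * i + 1)) := by
    rw [intervalIntegral.integral_finsetSum fun i _ => by
      apply Continuous.intervalIntegrable; fun_prop]
    refine sum_congr rfl fun i _ => ?_
    have monomial (x : ℝ) : (-(c * x ^ 2)) ^ i / i ! = (-c) ^ i / i ! * x ^ (2 * i) := by ring
    simp_rw [monomial, intervalIntegral.integral_const_mul, integral_pow,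
      Odd.neg_pow (odd_two_mul_add_one i)]
    push_cast
    ring
  have h_exp : IntervalIntegrable (fun x => rexp (-(c * x ^ 2))) volume (-a) a :=
    Continuous.intervalIntegrable (by fun_prop) _ _
  have h_poly :
      IntervalIntegrable (fun x => ∑ i ∈ range n, (-(c * x ^ 2)) ^ i / i !) volume (-a) a :=
    Continuous.intervalIntegrable (by fun_prop) _ _
  rw [← taylor_integral, ← intervalIntegral.integral_sub h_exp h_poly, ← Real.norm_eq_abs]
  refine (intervalIntegral.norm_integral_le_of_norm_le_const
    (C := (c * a ^ 2) ^ n * (n.succ / (n ! * n))) fun x hx => ?_).trans_eq ?_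
  · rw [uIoc_of_le (by linarith)] at hx
    have hx2 : c * x ^ 2 ≤ c * a ^ 2 := mul_le_mul_of_nonneg_left (sq_le_sq' hx.1.le hx.2) hc
    have habs : |-(c * x ^ 2)| = c * x ^ 2 := by rw [abs_neg, abs_of_nonneg (by positivity)]
    calc _ ≤ |-(c * x ^ 2)| ^ n * (n.succ / (n ! * n)) :=
          exp_bound (habs.symm ▸ hx2.trans hca) hn
      _ ≤ (c * a ^ 2) ^ n * (n.succ / (n ! * n)) := by rw [habs]; gcongr
  · rw [sub_neg_eq_add, abs_of_nonneg (by linarith)]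
    ring

lemma gaussianPDFReal_five_div_thirtysix_le {x : ℝ} (hx : |x| ≤ 0.326223) :
    gaussianPDFReal 0 (5 / 36) x ≤ gaussianPDFReal 0 (1 / 12) x := by
  have h_exp : rexp (0.326223 ^ 2 * (24 / 5)) ≤ 5 / 3 := by
    have h := abs_le.mp (exp_bound (x := 0.326223 ^ 2 * (24 / 5)) (by norm_num [abs_of_nonneg])
      (n := 8) (by norm_num))
    generalize rexp _ = E at h ⊢
    norm_num [sum_range_succ, Nat.factorial] at h
    linarith [h.2]
  rw [gaussianPDFReal_le_gaussianPDFReal_iff (by norm_num) (by norm_num)]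
  norm_num
  refine (exp_le_exp.mpr ?_).trans h_exp
  nlinarith [abs_nonneg x, sq_abs x]

lemma gaussianPDFReal_one_div_twelve_le {x : ℝ} (hx : 0.326224 < |x|) :
    gaussianPDFReal 0 (1 / 12) x ≤ gaussianPDFReal 0 (5 / 36) x := by
  have h_exp : 5 / 3 ≤ rexp (0.326224 ^ 2 * (24 / 5)) := by
    have h := abs_le.mp (exp_bound (x := 0.326224 ^ 2 * (24 / 5)) (by norm_num [abs_of_nonneg])
      (n := 8) (by norm_num))
    generalize rexp _ = E at h ⊢
    norm_num [sum_range_succ, Nat.factorial] at h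
    linarith [h.1]
  rw [gaussianPDFReal_le_gaussianPDFReal_iff (by norm_num) (by norm_num)]
  norm_num
  rw [exp_neg, inv_le_comm₀ (exp_pos _) (by norm_num)]
  norm_num
  refine h_exp.trans (exp_le_exp.mpr ?_)
  nlinarith [sq_abs x]

lemma gaussianReal_one_div_twelve_real_Icc_le :
    (gaussianReal 0 (1 / 12)).real (Icc (-0.326224) 0.326224) ≤ 0.5365903 / 0.723601 := by
  have h_sqrt : 0.723601 ≤ √(2 * π * ((1 / 12 : ℝ≥0) : ℝ)) := by
    rw [Real.le_sqrt (by norm_num) (by positivity)]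
    push_cast
    nlinarith [pi_gt_d6]
  have h_int : ∫ x in -0.326224..0.326224, rexp (-(6 * x ^ 2)) ≤ 0.5365903 := by
    have h := abs_le.mp (abs_integral_exp_neg_mul_sq_sub_sum_le (n := 8) (c := 6) (a := 0.326224)
      (by norm_num) (by norm_num) (by norm_num) (by norm_num))
    generalize ∫ x in -0.326224..0.326224, rexp (-(6 * x ^ 2)) = I at h ⊢
    norm_num [sum_range_succ, Nat.factorial] at h
    linarith [h.2]
  rw [gaussianReal_real_Icc_neg (by norm_num) (by norm_num),
    show (2 * ((1 / 12 : ℝ≥0) : ℝ))⁻¹ = 6 by norm_num, inv_mul_eq_div]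
  exact div_le_div₀ (by norm_num) h_int (by norm_num) h_sqrt

lemma le_gaussianReal_five_div_thirtysix_real_Icc :
    0.577888 / 0.934166 ≤ (gaussianReal 0 (5 / 36)).real (Icc (-0.326223) 0.326223) := by
  have h_sqrt : √(2 * π * ((5 / 36 : ℝ≥0) : ℝ)) ≤ 0.934166 := by
    rw [Real.sqrt_le_left (by norm_num)]
    push_cast
    nlinarith [pi_lt_d6]
  have h_int : 0.577888 ≤ ∫ x in -0.326223..0.326223, rexp (-(18 / 5 * x ^ 2)) := by
    have h := abs_le.mp (abs_integral_exp_neg_mul_sq_sub_sum_le (n := 8) (c := 18 / 5)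
      (a := 0.326223) (by norm_num) (by norm_num) (by norm_num) (by norm_num))
    generalize ∫ x in -0.326223..0.326223, rexp (-(18 / 5 * x ^ 2)) = I at h ⊢
    norm_num [sum_range_succ, Nat.factorial] at h
    linarith [h.1]
  rw [gaussianReal_real_Icc_neg (by norm_num) (by norm_num),
    show (2 * ((5 / 36 : ℝ≥0) : ℝ))⁻¹ = 18 / 5 by norm_num, inv_mul_eq_div]
  exact div_le_div₀ (h_int.trans' (by norm_num)) h_int (by positivity) h_sqrt

/-- The total variation distance between the centered Gaussian measures with variances `5/36`
and `1/12` is less than `0.12295`: for every Borel set `s`,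
`|N(0, 5/36)(s) − N(0, 1/12)(s)| < 0.12295`. -/
theorem gaussian_tv_lt :
    ∀ s : Set ℝ, MeasurableSet s →
      |((gaussianReal 0 (5 / 36) s).toReal) - ((gaussianReal 0 (1 / 12) s).toReal)|
        < 0.12295 := by
  intro s hs
  have h_inner : (gaussianReal 0 (5 / 36)).restrict (Icc (-0.326223) 0.326223) ≤
      (gaussianReal 0 (1 / 12)).restrict (Icc (-0.326223) 0.326223) :=
    gaussianReal_restrict_le_restrict (by norm_num) (by norm_num) measurableSet_Icc
      fun x hx => gaussianPDFReal_five_div_thirtysix_le (abs_le.mpr hx)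
  have h_outer : (gaussianReal 0 (1 / 12)).restrict (Icc (-0.326224) 0.326224)ᶜ ≤
      (gaussianReal 0 (5 / 36)).restrict (Icc (-0.326224) 0.326224)ᶜ :=
    gaussianReal_restrict_le_restrict (by norm_num) (by norm_num) measurableSet_Icc.compl
      fun x hx => gaussianPDFReal_one_div_twelve_le (not_le.mp fun h => hx (abs_le.mp h))
  calc _ ≤ _ := abs_measureReal_sub_measureReal_le_of_restrict_le hs measurableSet_Icc
        measurableSet_Icc (Icc_subset_Icc (by norm_num) (by norm_num)) h_inner h_outer
    _ ≤ 0.5365903 / 0.723601 - 0.577888 / 0.934166 :=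
        sub_le_sub gaussianReal_one_div_twelve_real_Icc_le
          le_gaussianReal_five_div_thirtysix_real_Icc
    _ < 0.12295 := by norm_num
end
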